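/- arXiv:1507.05241 — 10 statements merged into one kernel-verified Lean document; each statement's English description precedes it below -/
import Mathlib

section
/- Let m, n be positive integers and let p = 4mn - 1, q = 4mn - 2n - 1. For each j with 1 ≤ j ≤ 4mn - 2, write j = 2mq' + r with 0 ≤ r ≤ 2m - 1. Then (-1)^{⌊jq/p⌋} = (-1)^{q'+r-1}. -/
theorem epsilon_J2m2n (m n : ℕ) (hm : 1 ≤ m) (hn : 1 ≤ n)
    (j : ℕ) (hj1 : 1 ≤ j) (hj2 : j ≤ 4 * m * n - 2)
    (q' r : ℕ) (hjr : j = 2 * m * q' + r) (hr : r ≤ 2 * m - 1) :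
    (-1 : ℝ) ^ ((j * (4 * m * n - 2 * n - 1)) / (4 * m * n - 1)) =
      (-1 : ℝ) ^ ((q' : ℤ) + r - 1) := by
  have hmn2 : 2 * n + 2 ≤ 4 * m * n := by nlinarith
  have hj2' : j + 2 ≤ 4 * m * n := by omega
  have e1 : j = 2 * (m * q') + r := by rw [hjr]; ring
  have e2 : q' ≤ m * q' := Nat.le_mul_of_pos_left q' hm
  have hr' : r + 1 ≤ 2 * m := by omega
  have hq' : q' + 1 ≤ 2 * n := by nlinarith
  have hs : q' + 2 * n * r + 1 ≤ 4 * m * n := by nlinarith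
  have hs1 : 1 ≤ q' + 2 * n * r := by nlinarith [e1, e2]
  have h1 : q' + 1 ≤ j := by omega
  have hjrZ : (j : ℤ) = 2 * m * q' + r := by exact_mod_cast hjr
  have c1 : 2 * n ≤ 4 * m * n := by omega
  have c2 : 1 ≤ 4 * m * n - 2 * n := by omega
  have c3 : (1 : ℕ) ≤ 4 * m * n := by omega
  have c4 : q' ≤ j - 1 := by omega
  have hQZ : ((4 * m * n - 2 * n - 1 : ℕ) : ℤ) = 4 * m * n - 2 * n - 1 := by
    rw [Nat.cast_sub c2, Nat.cast_sub c1]; push_cast; ring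
  have hPZ : ((4 * m * n - 1 : ℕ) : ℤ) = 4 * m * n - 1 := by
    rw [Nat.cast_sub c3]; push_cast; ring
  have hKZ : ((j - 1 - q' : ℕ) : ℤ) = (j : ℤ) - 1 - q' := by
    rw [Nat.cast_sub c4, Nat.cast_sub hj1]; push_cast; ring
  have key : (j : ℤ) * ((4 * m * n - 2 * n - 1 : ℕ) : ℤ) + (q' + 2 * n * r) =
      ((j - 1 - q' : ℕ) : ℤ) * ((4 * m * n - 1 : ℕ) : ℤ) + ((4 * m * n - 1 : ℕ) : ℤ) := by
    rw [hQZ, hPZ, hKZ, hjrZ]; ring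
  have keyN : j * (4 * m * n - 2 * n - 1) + (q' + 2 * n * r) =
      (j - 1 - q') * (4 * m * n - 1) + (4 * m * n - 1) := by exact_mod_cast key
  have lo : (j - 1 - q') * (4 * m * n - 1) ≤ j * (4 * m * n - 2 * n - 1) := by omega
  have hi' : (j - 1 - q' + 1) * (4 * m * n - 1) =
      (j - 1 - q') * (4 * m * n - 1) + (4 * m * n - 1) := by ring
  have hi : j * (4 * m * n - 2 * n - 1) < (j - 1 - q' + 1) * (4 * m * n - 1) := by omega
  have hdiv : j * (4 * m * n - 2 * n - 1) / (4 * m * n - 1) = j - 1 - q' :=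
    Nat.div_eq_of_lt_le lo hi
  rw [hdiv]
  have h2 : q' * (m - 1) + q' = m * q' := by
    cases m with
    | zero => omega
    | succ k => show q' * k + q' = (k + 1) * q'; ring
  have hexp : j - 1 - q' = (q' + r - 1) + 2 * (q' * (m - 1)) := by
    rcases Nat.eq_zero_or_pos q' with hq0 | hq0
    · subst hq0; simp at e1 ⊢; omega
    · omega
  have hRHS : ((q' : ℤ) + r - 1) = ((q' + r - 1 : ℕ) : ℤ) := by
    have h4 : 1 ≤ q' + r := by omega
    rw [Nat.cast_sub h4]; push_cast; ring
  rw [hRHS, zpow_natCast, hexp, pow_add, pow_mul, neg_one_sq, one_pow, mul_one]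
end

section
/- Let m, n be positive integers and let p = 4mn + 1, q = 4mn - 2n + 1. For each j with 1 ≤ j ≤ 4mn, write j = 2mq' + r with 0 ≤ r ≤ 2m - 1. Then (-1)^{⌊jq/p⌋} = (-1)^{q'+r-1} if r ≥ 1, and (-1)^{⌊jq/p⌋} = (-1)^{q'} if r = 0. -/
/-!
Put `p = 4mn + 1`, so that `q = p - 2n`, and write `j = 2mq' + r`. Since `4mn = p - 1`,
`j q = p (j - q') + (q' - 2nr)`. The bounds on `j` and `r` give `0 ≤ q' < p` when `r = 0`
and `-p ≤ q' - 2nr < 0` when `r ≥ 1`, so `⌊jq/p⌋` is `j - q'` or `j - q' - 1`. Finally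
`j - q' = (2m - 1) q' + r` has the parity of `q' + r`.
-/

lemma neg_one_zpow_congr {α : Type*} [DivisionMonoid α] [HasDistribNeg α] {a b : ℤ}
    (h : Even (a - b)) : (-1 : α) ^ a = (-1) ^ b := by
  simp [neg_one_zpow_eq_ite, Int.even_sub.mp h]

section SchubertQuotient

variable (m n q' r : ℕ)

lemma ediv_eq_sub_add_ediv :
    ((2 * m * q' + r) * (4 * m * n - 2 * n + 1) : ℤ) / (4 * m * n + 1) =
      2 * m * q' + r - q' + (q' - 2 * n * r : ℤ) / (4 * m * n + 1) := by
  have hsplit : ((2 * m * q' + r) * (4 * m * n - 2 * n + 1) : ℤ) =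
      (4 * m * n + 1) * (2 * m * q' + r - q') + (q' - 2 * n * r) := by ring
  rw [hsplit, Int.mul_add_ediv_left _ _ (by positivity)]

lemma ediv_eq_sub_of_rem_eq_zero (hq' : q' ≤ 4 * m * n) :
    ((2 * m * q' : ℤ) * (4 * m * n - 2 * n + 1)) / (4 * m * n + 1) = 2 * m * q' - q' := by
  have h := ediv_eq_sub_add_ediv m n q' 0
  simp only [Nat.cast_zero, add_zero, mul_zero, sub_zero] at h
  rw [h, Int.ediv_eq_zero_of_lt (by positivity) (by norm_cast; omega), add_zero]

lemma ediv_eq_sub_sub_one_of_rem_pos (hlt : q' < 2 * n * r)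
    (hle : 2 * n * r ≤ 4 * m * n + 1 + q') :
    ((2 * m * q' + r) * (4 * m * n - 2 * n + 1) : ℤ) / (4 * m * n + 1) =
      2 * m * q' + r - q' - 1 := by
  zify at hlt hle
  have hneg : (q' - 2 * n * r : ℤ) / (4 * m * n + 1) = -1 :=
    (Int.ediv_eq_iff_of_pos (by positivity)).mpr ⟨by linarith, by linarith⟩
  rw [ediv_eq_sub_add_ediv, hneg]
  ring

end SchubertQuotient

theorem epsilon_J2m_neg2n_general (m n : ℕ) (hm : 1 ≤ m)
    (j : ℕ) (hj2 : j ≤ 4 * m * n)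
    (q' r : ℕ) (hjr : j = 2 * m * q' + r) (hr : r ≤ 2 * m - 1) :
    (1 ≤ r → (-1 : ℝ) ^ ((j * (4 * m * n - 2 * n + 1)) / (4 * m * n + 1)) =
        (-1 : ℝ) ^ ((q' : ℤ) + r - 1)) ∧
    (r = 0 → (-1 : ℝ) ^ ((j * (4 * m * n - 2 * n + 1)) / (4 * m * n + 1)) =
        (-1 : ℝ) ^ q') := by
  subst hjr
  have hq' : q' ≤ 2 * n := by nlinarith
  have h2n : 2 * n ≤ 4 * m * n := by nlinarith
  rw [← zpow_natCast, Int.natCast_div]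
  push_cast [Nat.cast_sub h2n]
  refine ⟨fun hr1 => ?_, fun hr0 => ?_⟩
  · have hlt : q' < 2 * n * r := by nlinarith
    have hle : 2 * n * r ≤ 4 * m * n + 1 + q' := by
      nlinarith [Nat.mul_le_mul_left (2 * n) (show r + 1 ≤ 2 * m by omega)]
    rw [ediv_eq_sub_sub_one_of_rem_pos m n q' r hlt hle]
    exact neg_one_zpow_congr ⟨m * q' - q', by ring⟩
  · subst hr0
    rw [Nat.cast_zero, add_zero, ediv_eq_sub_of_rem_eq_zero m n q' (by omega),
      ← zpow_natCast (-1 : ℝ) q']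
    exact neg_one_zpow_congr ⟨m * q' - q', by ring⟩

theorem epsilon_J2m_neg2n (m n : ℕ) (hm : 1 ≤ m) (hn : 1 ≤ n)
    (j : ℕ) (hj1 : 1 ≤ j) (hj2 : j ≤ 4 * m * n)
    (q' r : ℕ) (hjr : j = 2 * m * q' + r) (hr : r ≤ 2 * m - 1) :
    (1 ≤ r → (-1 : ℝ) ^ ((j * (4 * m * n - 2 * n + 1)) / (4 * m * n + 1)) =
        (-1 : ℝ) ^ ((q' : ℤ) + r - 1)) ∧
    (r = 0 → (-1 : ℝ) ^ ((j * (4 * m * n - 2 * n + 1)) / (4 * m * n + 1)) =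
        (-1 : ℝ) ^ q') :=
  epsilon_J2m_neg2n_general m n hm j hj2 q' r hjr hr
end

section
/- Let m, n be positive integers and let p = 4mn + 2n - 1, q = 4mn - 1. For each j with 1 ≤ j ≤ 2n(2m+1) - 2, write j = (2m+1)q' + r with 0 ≤ r ≤ 2m. Then (-1)^{⌊jq/p⌋} = (-1)^{r-1}. -/
theorem epsilon_J2m1_2n (m n : ℕ) (hm : 1 ≤ m) (hn : 1 ≤ n)
    (j : ℕ) (hj1 : 1 ≤ j) (hj2 : j ≤ 2 * n * (2 * m + 1) - 2)
    (q' r : ℕ) (hjr : j = (2 * m + 1) * q' + r) (hr : r ≤ 2 * m) :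
    (-1 : ℝ) ^ ((j * (4 * m * n - 1)) / (4 * m * n + 2 * n - 1)) =
      (-1 : ℝ) ^ ((r : ℤ) - 1) := by
  have hmn : 1 ≤ m * n := Nat.one_le_iff_ne_zero.mpr (by positivity)
  have hq'n : q' + 1 ≤ 2 * n := by
    have hp0 : 0 < 2 * n * (2 * m + 1) := by positivity
    have hlt : (2 * m + 1) * q' < (2 * m + 1) * (2 * n) := by
      calc (2 * m + 1) * q' ≤ j := by rw [hjr]; exact Nat.le_add_right _ _
        _ ≤ 2 * n * (2 * m + 1) - 2 := hj2
        _ < 2 * n * (2 * m + 1) := Nat.sub_lt hp0 (by norm_num)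
        _ = (2 * m + 1) * (2 * n) := by ring
    exact Nat.lt_of_mul_lt_mul_left hlt
  have hjq' : q' + 1 ≤ j := by
    rcases Nat.eq_zero_or_pos q' with h | h
    · rw [h] at hjr ⊢; simp at hjr; omega
    · calc q' + 1 ≤ (2 * m + 1) * q' := by nlinarith
        _ ≤ j := by rw [hjr]; exact Nat.le_add_right _ _
  have h1 : 1 ≤ 4 * m * n := by nlinarith
  have hp1 : 1 ≤ 4 * m * n + 2 * n := by omega
  have hjZ : (j : ℤ) = (2 * m + 1) * q' + r := by exact_mod_cast congrArg Nat.cast hjr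
  have key : (j * (4 * m * n - 1)) / (4 * m * n + 2 * n - 1) = j - (q' + 1) := by
    apply Nat.div_eq_of_lt_le
    · zify [h1, hp1, hjq']
      have hid : ((j : ℤ)) * (4 * m * n - 1) =
          (4 * m * n + 2 * n - 1) * ((j : ℤ) - (q' + 1)) +
            ((4 * (m:ℤ) * n + 2 * n - 1) - q' - 2 * n * r) := by rw [hjZ]; ring
      have h2 : (2 * (n:ℤ)) * r ≤ (2 * n) * (2 * m) := by
        have hrz : (r : ℤ) ≤ 2 * m := by exact_mod_cast hr
        have hn0 : (0:ℤ) ≤ 2 * n := by positivity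
        exact mul_le_mul_of_nonneg_left hrz hn0
      have h3 : (q' : ℤ) + 1 ≤ 2 * n := by exact_mod_cast hq'n
      nlinarith [hid, h2, h3]
    · zify [h1, hp1, hjq']
      have hid : ((j : ℤ)) * (4 * m * n - 1) =
          (4 * m * n + 2 * n - 1) * ((j : ℤ) - (q' + 1) + 1) - ((q':ℤ) + 2 * n * r) := by
        rw [hjZ]; ring
      have h4 : 1 ≤ (q' : ℤ) + 2 * n * r := by
        rcases Nat.eq_zero_or_pos r with hr0 | hr0
        · have hq1 : 1 ≤ q' := by
            by_contra hcon
            have hq0 : q' = 0 := by omega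
            rw [hq0, hr0] at hjr; simp at hjr; omega
          have hq1' : (1:ℤ) ≤ q' := by exact_mod_cast hq1
          have h0 : (0:ℤ) ≤ 2 * n * r := by positivity
          linarith
        · have hr1 : (1:ℤ) ≤ r := by exact_mod_cast hr0
          have hn1 : (1:ℤ) ≤ n := by exact_mod_cast hn
          have hq0 : (0:ℤ) ≤ q' := by positivity
          nlinarith
      nlinarith [hid, h4]
  rw [key]
  have hN : ((j - (q' + 1) : ℕ) : ℤ) = (r : ℤ) - 1 + 2 * (m * q') := by
    rw [Nat.cast_sub hjq', hjZ]; push_cast; ring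
  calc (-1 : ℝ) ^ (j - (q' + 1))
      = (-1 : ℝ) ^ (((j - (q' + 1) : ℕ) : ℤ)) := (zpow_natCast _ _).symm
    _ = (-1 : ℝ) ^ ((r : ℤ) - 1 + 2 * ((m : ℤ) * q')) := by rw [hN]
    _ = (-1 : ℝ) ^ ((r : ℤ) - 1) * ((-1 : ℝ) ^ (2:ℤ)) ^ ((m : ℤ) * q') := by
        rw [← zpow_mul, ← zpow_add₀ (by norm_num : (-1:ℝ) ≠ 0)]
    _ = (-1 : ℝ) ^ ((r : ℤ) - 1) := by norm_num
end

section
/- Let m, n be positive integers and let p = 4mn + 2n + 1, q = 4mn + 1. For each j with 1 ≤ j ≤ 2n(2m+1), write j = (2m+1)q' + r with 0 ≤ r ≤ 2m. Then (-1)^{⌊jq/p⌋} = (-1)^{r-1} if r ≥ 1, and (-1)^{⌊jq/p⌋} = 1 if r = 0. -/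
theorem epsilon_J2m1_neg2n (m n : ℕ) (hm : 1 ≤ m) (hn : 1 ≤ n)
    (j : ℕ) (hj1 : 1 ≤ j) (hj2 : j ≤ 2 * n * (2 * m + 1))
    (q' r : ℕ) (hjr : j = (2 * m + 1) * q' + r) (hr : r ≤ 2 * m) :
    (1 ≤ r → (-1 : ℝ) ^ ((j * (4 * m * n + 1)) / (4 * m * n + 2 * n + 1)) =
        (-1 : ℝ) ^ ((r : ℤ) - 1)) ∧
    (r = 0 → (-1 : ℝ) ^ ((j * (4 * m * n + 1)) / (4 * m * n + 2 * n + 1)) = 1) := by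
  subst hjr
  constructor
  · intro hr1
    obtain ⟨r', rfl⟩ := Nat.exists_eq_add_of_le hr1
    obtain ⟨k, hk⟩ := Nat.exists_eq_add_of_le hr
    -- hk : 2 * m = 1 + r' + k
    have hq : q' < 2 * n := by nlinarith
    have key : ((2 * m + 1) * q' + (1 + r')) * (4 * m * n + 1)
        = (2 * n + 2 * n * k + 1 + q') + (4 * m * n + 2 * n + 1) * (2 * m * q' + r') := by
      have hk' : (2 * (m : ℤ)) = 1 + r' + k := by exact_mod_cast hk
      zify
      linear_combination (2 * (n : ℤ)) * hk'
    have hs : 2 * n + 2 * n * k + 1 + q' < 4 * m * n + 2 * n + 1 := by nlinarith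
    rw [key, Nat.add_mul_div_left _ _ (by positivity), Nat.div_eq_of_lt hs, zero_add]
    have h2 : ((1 + r' : ℕ) : ℤ) - 1 = (r' : ℤ) := by push_cast; ring
    rw [h2, zpow_natCast, show 2 * m * q' + r' = 2 * (m * q') + r' by ring,
      pow_add, pow_mul, neg_one_sq, one_pow, one_mul]
  · intro h0
    subst h0
    have hq : q' ≤ 2 * n := by nlinarith
    have key : ((2 * m + 1) * q' + 0) * (4 * m * n + 1)
        = q' + (4 * m * n + 2 * n + 1) * (2 * m * q') := by ring
    have hs : q' < 4 * m * n + 2 * n + 1 := by nlinarith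
    rw [key, Nat.add_mul_div_left _ _ (by positivity), Nat.div_eq_of_lt hs, zero_add,
      show 2 * m * q' = 2 * (m * q') by ring, pow_mul, neg_one_sq, one_pow]
end

section
/- Let m ≥ 1 be an integer and x, y real (or complex) numbers. Define t = 2 + (y-2)(y+2-x²)·S_{m-1}(y)² and μ = 1 + (y+2-x²)·S_{m-1}(y)·(S_m(y) - S_{m-1}(y)). Then μ² + 1 - μt = (y+2-x²)·S_{m-1}(y)²·(t+2-x²). -/
open Real

/-- Chebyshev polynomials of the second kind, nonnegative indices. -/
noncomputable def Snat (z : ℝ) : ℕ → ℝ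
  | 0 => 1
  | 1 => z
  | (n+2) => z * Snat z (n+1) - Snat z n

/-- Chebyshev polynomials of the second kind, extended to all integer indices
by the recursion `S k = z * S (k-1) - S (k-2)` (so `S (-1) = 0`, `S (-k-2) = -S k`). -/
noncomputable def S (k : ℤ) (z : ℝ) : ℝ :=
  if 0 ≤ k then Snat z k.toNat
  else if k = -1 then 0 else -Snat z (-k - 2).toNat

lemma Snat_pell (z : ℝ) : ∀ n : ℕ,
    Snat z (n+1) ^ 2 + Snat z n ^ 2 - z * Snat z (n+1) * Snat z n = 1 := by
  intro n
  induction n with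
  | zero => simp [Snat]; ring
  | succ k ih =>
      show Snat z (k+2) ^ 2 + Snat z (k+1) ^ 2 - z * Snat z (k+2) * Snat z (k+1) = 1
      rw [show Snat z (k+2) = z * Snat z (k+1) - Snat z k from rfl]
      linear_combination ih

lemma S_ofNat (n : ℕ) (z : ℝ) : S (n : ℤ) z = Snat z n := by
  simp [S]

theorem riley_mu_identity (m : ℕ) (hm : 1 ≤ m) (x y : ℝ) (t mu : ℝ)
    (ht : t = 2 + (y - 2) * (y + 2 - x ^ 2) * S ((m : ℤ) - 1) y ^ 2)
    (hmu : mu = 1 + (y + 2 - x ^ 2) * S ((m : ℤ) - 1) y * (S m y - S ((m : ℤ) - 1) y)) :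
    mu ^ 2 + 1 - mu * t = (y + 2 - x ^ 2) * S ((m : ℤ) - 1) y ^ 2 * (t + 2 - x ^ 2) := by
  obtain ⟨k, rfl⟩ : ∃ k, m = k + 1 := ⟨m - 1, (Nat.succ_pred_eq_of_pos hm).symm⟩
  have h1 : ((k + 1 : ℕ) : ℤ) - 1 = (k : ℤ) := by push_cast; ring
  have e1 : S (((k+1 : ℕ) : ℤ) - 1) y = Snat y k := by rw [h1, S_ofNat]
  rw [e1, S_ofNat] at hmu
  rw [e1] at ht ⊢
  have key := Snat_pell y k
  subst ht hmu
  linear_combination ((y + 2 - x ^ 2) ^ 2 * Snat y k ^ 2) * key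
end

section
/- Let m, n be positive integers and x₀ a real number with √(4 - 1/(mn)) < |x₀| ≤ 2. Define, for real y, t(y) = 2 + (y-2)(y+2-x₀²)·S_{m-1}(y)² and μ(y) = 1 - (y+2-x₀²)·S_{m-1}(y)·(S_{m-1}(y) - S_{m-2}(y)), and f(y) = S_n(t(y)) - μ(y)·S_{n-1}(t(y)). Then f has no real roots at all. -/
open Real

lemma snat_zero (z : ℝ) : Snat z 0 = 1 := rfl
lemma snat_one (z : ℝ) : Snat z 1 = z := rfl
lemma snat_rec (z : ℝ) (k : ℕ) : Snat z (k+2) = z * Snat z (k+1) - Snat z k := rfl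

lemma snat_pell (z : ℝ) : ∀ k : ℕ,
    Snat z (k+1)^2 + Snat z k^2 - z * Snat z (k+1) * Snat z k = 1
  | 0 => by simp [snat_zero, snat_one]; ring
  | (k+1) => by
    have ih := snat_pell z k
    rw [snat_rec]
    linear_combination ih

lemma snat_abs_le (z : ℝ) (hz : |z| ≤ 2) : ∀ k : ℕ, |Snat z k| ≤ k + 1
  | 0 => by simp [snat_zero]
  | (k+1) => by
    have ih := snat_abs_le z hz k
    have hp := snat_pell z k
    have h1 : z * Snat z (k+1) * Snat z k ≤ 2 * (|Snat z (k+1)| * |Snat z k|) := by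
      calc z * Snat z (k+1) * Snat z k ≤ |z * Snat z (k+1) * Snat z k| := le_abs_self _
        _ = |z| * |Snat z (k+1)| * |Snat z k| := by rw [abs_mul, abs_mul]
        _ ≤ 2 * (|Snat z (k+1)| * |Snat z k|) := by
            nlinarith [mul_nonneg (abs_nonneg (Snat z (k+1))) (abs_nonneg (Snat z k)), abs_nonneg (Snat z (k+1)), abs_nonneg (Snat z k), hz]
    have h2 : (|Snat z (k+1)| - |Snat z k|)^2 ≤ 1 := by
      nlinarith [sq_abs (Snat z (k+1)), sq_abs (Snat z k)]
    have h3 : |Snat z (k+1)| ≤ |Snat z k| + 1 := by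
      nlinarith [abs_nonneg (Snat z (k+1)), abs_nonneg (Snat z k)]
    push_cast
    push_cast at ih
    linarith

lemma snat_ge (t : ℝ) (ht : 2 ≤ t) : ∀ k : ℕ,
    0 ≤ Snat t k ∧ Snat t k + 1 ≤ Snat t (k+1)
  | 0 => by simp [snat_zero, snat_one]; linarith
  | (k+1) => by
    obtain ⟨h0, h1⟩ := snat_ge t ht k
    constructor
    · linarith
    · rw [snat_rec]; nlinarith

lemma key_ident (T M : ℝ) (k : ℕ) :
    (Snat T (k+1) - M * Snat T k) * (Snat T (k+1) - (T - M) * Snat T k)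
      = 1 - (M^2 - T*M + 1) * (Snat T k)^2 := by
  linear_combination snat_pell T k

lemma D_ident (y c s s' : ℝ) (hrel : s^2 + s'^2 - y*s*s' = 1) :
    (1 - (y+2-c)*s*(s-s'))^2 - (2+(y-2)*(y+2-c)*s^2)*(1 - (y+2-c)*s*(s-s')) + 1
      = (y+2-c)*s^2*((2+(y-2)*(y+2-c)*s^2) + 2 - c) := by
  linear_combination ((y+2-c)^2*s^2) * hrel

set_option maxHeartbeats 1000000 in
lemma core (m k : ℕ) (hm : 1 ≤ m) (c y s s' T M F : ℝ)
    (hrel : s^2 + s'^2 - y*s*s' = 1)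
    (hs_abs : |y| ≤ 2 → |s| ≤ m)
    (hs_mono : 2 ≤ y → 1 ≤ s ∧ s' + 1 ≤ s)
    (hc1 : 4 - 1/((m:ℝ)*((k:ℝ)+1)) < c) (hc2 : c ≤ 4)
    (hT : T = 2 + (y-2)*(y+2-c)*s^2)
    (hM : M = 1 - (y+2-c)*s*(s-s'))
    (hF : F = Snat T (k+1) - M * Snat T k) : F ≠ 0 := by
  have hmpos : (1:ℝ) ≤ (m:ℝ) := by exact_mod_cast hm
  have hkpos : (1:ℝ) ≤ (k:ℝ)+1 := by
    have : (0:ℝ) ≤ (k:ℝ) := Nat.cast_nonneg k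
    linarith
  have hMN : (1:ℝ) ≤ (m:ℝ)*((k:ℝ)+1) := by nlinarith
  have hMNpos : (0:ℝ) < (m:ℝ)*((k:ℝ)+1) := by linarith
  have hinv_le : 1/((m:ℝ)*((k:ℝ)+1)) ≤ 1 := by
    rw [div_le_one hMNpos]; exact hMN
  have hc3 : 3 < c := by linarith
  by_cases hy : 2 ≤ y
  · obtain ⟨hs1, hss'⟩ := hs_mono hy
    have ha : 0 ≤ y + 2 - c := by linarith
    have hT2 : 2 ≤ T := by
      rw [hT]
      nlinarith [mul_nonneg (mul_nonneg (show (0:ℝ) ≤ y-2 by linarith) ha) (sq_nonneg s)]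
    have hM1 : M ≤ 1 := by
      rw [hM]
      nlinarith [mul_nonneg (mul_nonneg ha (show (0:ℝ) ≤ s by linarith))
        (show (0:ℝ) ≤ s - s' by linarith)]
    obtain ⟨hσ0, hσ1⟩ := snat_ge T hT2 k
    rw [hF]
    have : 1 ≤ Snat T (k+1) - M * Snat T k := by
      nlinarith [mul_nonneg (by linarith : (0:ℝ) ≤ 1 - M) hσ0]
    intro h; rw [h] at this; linarith
  · push_neg at hy
    have hkey := key_ident T M k
    have hD : M^2 - T*M + 1 = (y+2-c)*s^2*(T+2-c) := by
      rw [hT, hM]; exact D_ident y c s s' hrel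
    rw [hD, ← hF] at hkey
    suffices hlt : (y+2-c)*s^2*(T+2-c)*(Snat T k)^2 < 1 by
      intro hF0
      rw [hF0, zero_mul] at hkey
      linarith
    by_cases hA : y + 2 - c ≤ 0
    · have hT2 : 2 ≤ T := by
        rw [hT]
        nlinarith [mul_nonneg (mul_nonneg (show (0:ℝ) ≤ 2-y by linarith)
          (show (0:ℝ) ≤ c-(y+2) by linarith)) (sq_nonneg s)]
      have h1 : 0 ≤ T + 2 - c := by linarith
      have hnn : 0 ≤ s^2*(T+2-c)*(Snat T k)^2 :=
        mul_nonneg (mul_nonneg (sq_nonneg s) h1) (sq_nonneg _)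
      nlinarith [mul_nonneg hnn (show (0:ℝ) ≤ -(y+2-c) by linarith)]
    · push_neg at hA
      have hy1 : c - 2 < y := by linarith
      have hyabs : |y| ≤ 2 := abs_le.2 ⟨by linarith, le_of_lt hy⟩
      have hsabs := hs_abs hyabs
      have hs2' : s^2 ≤ (m:ℝ)^2 := by
        calc s^2 = |s|^2 := (sq_abs s).symm
          _ ≤ (m:ℝ)^2 := pow_le_pow_left₀ (abs_nonneg s) hsabs 2
      have h4c : 0 ≤ 4 - c := by linarith
      set e : ℝ := 4 - c with he
      have h4c' : e < 1/((m:ℝ)*((k:ℝ)+1)) := by linarith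
      have hE : e * ((m:ℝ)*((k:ℝ)+1)) < 1 := by
        rw [lt_div_iff₀ hMNpos] at h4c'; exact h4c'
      have ha' : y + 2 - c < e := by simp only [he]; linarith
      have hTle : T ≤ 2 := by
        rw [hT]
        nlinarith [mul_nonneg (mul_nonneg (show (0:ℝ) ≤ 2-y by linarith)
          (le_of_lt hA)) (sq_nonneg s)]
      have hTge : -2 ≤ T := by
        have h2y : 0 < 2 - y := by linarith
        have h2y' : 2 - y < e := by simp only [he]; linarith
        have hstep : (2-y)*((y+2-c)*s^2) ≤ e*(e*(m:ℝ)^2) := by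
          apply mul_le_mul (le_of_lt h2y')
          · apply mul_le_mul (le_of_lt ha') hs2' (sq_nonneg s) h4c
          · positivity
          · exact h4c
        have hemm : e*(m:ℝ) < 1 := by
          nlinarith [mul_nonneg (mul_nonneg h4c (show (0:ℝ) ≤ (m:ℝ) by linarith))
            (show (0:ℝ) ≤ (k:ℝ) from Nat.cast_nonneg k)]
        have hee : e*(e*(m:ℝ)^2) < 1 := by
          nlinarith [mul_nonneg h4c (show (0:ℝ) ≤ (m:ℝ) by linarith), hemm]
        rw [hT]; nlinarith [hstep, hee]
      have hTabs : |T| ≤ 2 := abs_le.2 ⟨hTge, hTle⟩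
      have hσ := snat_abs_le T hTabs k
      have hσ2 : (Snat T k)^2 ≤ ((k:ℝ)+1)^2 := by
        calc (Snat T k)^2 = |Snat T k|^2 := (sq_abs _).symm
          _ ≤ ((k:ℝ)+1)^2 := pow_le_pow_left₀ (abs_nonneg _) hσ 2
      by_cases hTc : 0 ≤ T + 2 - c
      · have hT2c : T + 2 - c ≤ e := by simp only [he]; linarith
        have c1 : (y+2-c)*s^2 ≤ e*(m:ℝ)^2 :=
          mul_le_mul (le_of_lt ha') hs2' (sq_nonneg s) h4c
        have c2 : (T+2-c)*(Snat T k)^2 ≤ e*((k:ℝ)+1)^2 :=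
          mul_le_mul hT2c hσ2 (sq_nonneg (Snat T k)) h4c
        have ctot : (y+2-c)*s^2*((T+2-c)*(Snat T k)^2) ≤ (e*(m:ℝ)^2)*(e*((k:ℝ)+1)^2) := by
          apply mul_le_mul c1 c2 (mul_nonneg hTc (sq_nonneg _))
          positivity
        have hfin : (e*(m:ℝ)^2)*(e*((k:ℝ)+1)^2) < 1 := by
          nlinarith [mul_nonneg h4c (le_of_lt hMNpos), hE]
        linarith [ctot, hfin]
      · push_neg at hTc
        have h1 : 0 ≤ (y+2-c)*s^2 := by positivity
        have h2 : 0 ≤ (c-(T+2))*(Snat T k)^2 :=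
          mul_nonneg (by linarith) (sq_nonneg _)
        nlinarith [mul_nonneg h1 h2]

set_option maxHeartbeats 1000000 in
theorem J2m_neg2n_no_real_roots (m n : ℕ) (hm : 1 ≤ m) (hn : 1 ≤ n) (x₀ : ℝ)
    (hx1 : Real.sqrt (4 - 1 / (m * n)) < |x₀|) (hx2 : |x₀| ≤ 2)
    (t mu f : ℝ → ℝ)
    (ht : ∀ y, t y = 2 + (y - 2) * (y + 2 - x₀ ^ 2) * S ((m : ℤ) - 1) y ^ 2)
    (hmu : ∀ y, mu y = 1 - (y + 2 - x₀ ^ 2) * S ((m : ℤ) - 1) y *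
        (S ((m : ℤ) - 1) y - S ((m : ℤ) - 2) y))
    (hf : ∀ y, f y = S n (t y) - mu y * S ((n : ℤ) - 1) (t y)) :
    ∀ y : ℝ, f y ≠ 0 := by
  obtain ⟨k, rfl⟩ : ∃ k, n = k + 1 := ⟨n - 1, by omega⟩
  intro y
  have hSm1 : S ((m : ℤ) - 1) y = Snat y (m - 1) := by
    unfold S
    rw [if_pos (show (0:ℤ) ≤ (m:ℤ) - 1 by omega)]
    congr 1
    omega
  have hSn : S ((k+1 : ℕ) : ℤ) (t y) = Snat (t y) (k+1) := by
    unfold S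
    rw [if_pos (show (0:ℤ) ≤ ((k+1:ℕ):ℤ) by omega)]
    congr 1
  have hSn1 : S (((k+1:ℕ) : ℤ) - 1) (t y) = Snat (t y) k := by
    unfold S
    rw [if_pos (show (0:ℤ) ≤ ((k+1:ℕ):ℤ) - 1 by omega)]
    congr 1
    omega
  -- constants
  have hm1 : (1:ℝ) ≤ (m:ℝ) := by exact_mod_cast hm
  have hk1 : (1:ℝ) ≤ ((k+1:ℕ):ℝ) := by exact_mod_cast Nat.one_le_iff_ne_zero.2 (Nat.succ_ne_zero k)
  have hMN : (1:ℝ) ≤ (m:ℝ) * ((k+1:ℕ):ℝ) := by nlinarith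
  have hA0 : (0:ℝ) ≤ 4 - 1 / ((m:ℝ) * ((k+1:ℕ):ℝ)) := by
    have : 1 / ((m:ℝ) * ((k+1:ℕ):ℝ)) ≤ 1 := by
      rw [div_le_one (by linarith)]
      exact hMN
    linarith
  have hc1 : 4 - 1 / ((m:ℝ) * ((k:ℝ)+1)) < x₀ ^ 2 := by
    have hs := Real.sq_sqrt hA0
    have h1 : 4 - 1 / ((m:ℝ) * ((k+1:ℕ):ℝ)) < x₀ ^ 2 := by
      nlinarith [Real.sqrt_nonneg (4 - 1 / ((m:ℝ) * ((k+1:ℕ):ℝ))), sq_abs x₀, hx1]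
    have : ((k+1:ℕ):ℝ) = (k:ℝ) + 1 := by push_cast; ring
    rwa [this] at h1
  have hc2 : x₀ ^ 2 ≤ 4 := by nlinarith [abs_nonneg x₀, sq_abs x₀]
  -- Chebyshev relation for s, s'
  have hrel : (Snat y (m-1))^2 + (S ((m:ℤ)-2) y)^2
      - y * (Snat y (m-1)) * (S ((m:ℤ)-2) y) = 1 := by
    rcases Nat.lt_or_ge m 2 with h2 | h2
    · have hm' : m = 1 := by omega
      subst hm'
      have hS2 : S ((1:ℕ) - 2 : ℤ) y = 0 := by
        unfold S
        norm_num
      rw [hS2]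
      simp [snat_zero]
    · have hS2 : S ((m:ℤ)-2) y = Snat y (m-2) := by
        unfold S
        rw [if_pos (show (0:ℤ) ≤ (m:ℤ) - 2 by omega)]
        congr 1
        omega
      have e1 : m - 1 = (m - 2) + 1 := by omega
      rw [hS2, e1]
      exact snat_pell y (m-2)
  have hs_abs : |y| ≤ 2 → |Snat y (m-1)| ≤ (m:ℝ) := by
    intro h
    have h2 := snat_abs_le y h (m-1)
    have h3 : ((m-1:ℕ):ℝ) = (m:ℝ) - 1 := by
      push_cast [Nat.cast_sub hm]
      ring
    rw [h3] at h2
    linarith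
  have hs_mono : 2 ≤ y → 1 ≤ Snat y (m-1) ∧ S ((m:ℤ)-2) y + 1 ≤ Snat y (m-1) := by
    intro hy
    rcases Nat.lt_or_ge m 2 with h2 | h2
    · have hm' : m = 1 := by omega
      subst hm'
      have hS2 : S ((1:ℕ) - 2 : ℤ) y = 0 := by
        unfold S
        norm_num
      rw [hS2]
      simp [snat_zero]
    · have hS2 : S ((m:ℤ)-2) y = Snat y (m-2) := by
        unfold S
        rw [if_pos (show (0:ℤ) ≤ (m:ℤ) - 2 by omega)]
        congr 1
        omega
      have e1 : m - 1 = (m - 2) + 1 := by omega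
      obtain ⟨h0, h1⟩ := snat_ge y hy (m-2)
      rw [hS2, e1]
      exact ⟨by linarith, h1⟩
  exact core m k hm (x₀^2) y (Snat y (m-1)) (S ((m:ℤ)-2) y) (t y) (mu y) (f y)
    hrel hs_abs hs_mono hc1 hc2
    (by rw [ht y, hSm1])
    (by rw [hmu y, hSm1])
    (by rw [hf y, hSn, hSn1])
end

section
/- Let n ≥ 1 be an integer, and for 1 ≤ j ≤ n let t_j = 2cos((2j-1)π/(2n+1)). Then (-1)^{j-1}·S_n(t_j) > 0. In fact S_n(t_j) = (-1)^{j-1}·cos((2j-1)π/(2(2n+1)))/sin((2j-1)π/(2n+1)). -/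
open Real

lemma Snat_sin (θ : ℝ) : ∀ k, Snat (2 * Real.cos θ) k * Real.sin θ = Real.sin ((k + 1) * θ)
  | 0 => by simp [Snat]
  | 1 => by
      simp only [Snat]
      push_cast
      rw [show (1:ℝ) + 1 = 2 by norm_num, Real.sin_two_mul]
      ring
  | (k+2) => by
      have h1 := Snat_sin θ k
      have h2 := Snat_sin θ (k+1)
      simp only [Snat]
      have ha : ((k:ℝ) + 2 + 1) * θ = ((k+1)+1) * θ + θ := by ring
      have hb : ((k:ℝ) + 1) * θ = ((k+1)+1) * θ - θ := by ring
      push_cast at h1 h2 ⊢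
      rw [ha]
      rw [hb] at h1
      rw [Real.sin_add, Real.sin_sub] at *
      push_cast at *
      linear_combination (2 * Real.cos θ) * h2 - h1

theorem S_at_tj (n : ℕ) (hn : 1 ≤ n) (j : ℕ) (hj1 : 1 ≤ j) (hj2 : j ≤ n) :
    S n (2 * Real.cos ((2 * j - 1) * Real.pi / (2 * n + 1))) =
      (-1 : ℝ) ^ (j - 1) * Real.cos ((2 * j - 1) * Real.pi / (2 * (2 * n + 1))) /
        Real.sin ((2 * j - 1) * Real.pi / (2 * n + 1)) ∧
    0 < (-1 : ℝ) ^ (j - 1) * S n (2 * Real.cos ((2 * j - 1) * Real.pi / (2 * n + 1))) := by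
  obtain ⟨m, rfl⟩ : ∃ m, j = m + 1 := ⟨j - 1, (Nat.succ_pred_eq_of_pos hj1).symm⟩
  set θ : ℝ := (2 * (m+1 : ℕ) - 1) * Real.pi / (2 * n + 1) with hθ
  set φ : ℝ := (2 * (m+1 : ℕ) - 1) * Real.pi / (2 * (2 * n + 1)) with hφ
  have hnum : (0:ℝ) < 2 * ((m:ℝ)+1) - 1 := by
    have : (0:ℝ) ≤ m := Nat.cast_nonneg m; linarith
  have hden : (0:ℝ) < 2 * (n:ℝ) + 1 := by positivity
  have hjn : (m:ℝ) + 1 ≤ (n:ℝ) := by exact_mod_cast hj2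
  have hθpos : 0 < θ := by
    rw [hθ]; push_cast
    exact div_pos (by nlinarith [Real.pi_pos]) hden
  have hθlt : θ < Real.pi := by
    rw [hθ]; push_cast
    rw [div_lt_iff₀ hden]
    nlinarith [Real.pi_pos]
  have hsinθ : 0 < Real.sin θ := Real.sin_pos_of_pos_of_lt_pi hθpos hθlt
  have hφpos : 0 < φ := by
    rw [hφ]; push_cast
    exact div_pos (by nlinarith [Real.pi_pos]) (by positivity)
  have hφlt : φ < Real.pi / 2 := by
    rw [hφ]; push_cast
    rw [div_lt_div_iff₀ (by positivity) two_pos]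
    nlinarith [Real.pi_pos]
  have hcosφ : 0 < Real.cos φ := Real.cos_pos_of_mem_Ioo ⟨by linarith, hφlt⟩
  have hS : S n (2 * Real.cos θ) = Snat (2 * Real.cos θ) n := by
    simp [S]
  have key := Snat_sin θ n
  have hangle : ((n:ℝ) + 1) * θ = ((m:ℝ)+1) * Real.pi - (Real.pi/2 - φ) := by
    rw [hθ, hφ]; push_cast; field_simp; ring
  have hsin : Real.sin (((n:ℝ)+1) * θ) = (-1:ℝ)^m * Real.cos φ := by
    rw [hangle]
    have hz : ((m:ℝ)+1) * Real.pi = (((m:ℤ)+1 : ℤ) : ℝ) * Real.pi := by push_cast; ring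
    rw [hz, Real.sin_int_mul_pi_sub, Real.sin_pi_div_two_sub,
      zpow_add_one₀ (by norm_num : (-1:ℝ) ≠ 0), zpow_natCast]
    ring
  have hSval : Snat (2 * Real.cos θ) n = (-1:ℝ)^m * Real.cos φ / Real.sin θ := by
    rw [eq_div_iff (ne_of_gt hsinθ), key, hsin]
  have hsimp : (m + 1 - 1) = m := rfl
  constructor
  · rw [hS, hSval, hsimp]
  · rw [hS, hSval, hsimp]
    have h1 : (-1:ℝ)^m * ((-1:ℝ)^m * Real.cos φ / Real.sin θ)
        = Real.cos φ / Real.sin θ := by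
      rw [mul_div_assoc, ← mul_assoc, ← pow_add]
      rw [Even.neg_one_pow ⟨m, by ring⟩, one_mul]
    rw [h1]
    positivity
end

section
/- Let m, n be positive integers and x₀ a real number with |x₀| ≥ 2cos(π/(4m+2)). Define, for real y, t(y) = x₀² - y - (y-2)(y+2-x₀²)·S_m(y)·S_{m-1}(y) and μ(y) = 1 - (y+2-x₀²)·S_m(y)·(S_m(y) - S_{m-1}(y)), and f(y) = S_n(t(y)) - μ(y)·S_{n-1}(t(y)). Then f has at least n-1 distinct real roots. -/
open Real

lemma S_natCast (k : ℕ) (z : ℝ) : S (k : ℤ) z = Snat z k := by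
  simp [S]

lemma S_sub_one (k : ℕ) (hk : 1 ≤ k) (z : ℝ) : S ((k : ℤ) - 1) z = Snat z (k - 1) := by
  have h0 : (0 : ℤ) ≤ (k : ℤ) - 1 := by omega
  rw [S, if_pos h0]
  congr 1
  omega

lemma cont_snat : ∀ k : ℕ, Continuous fun z : ℝ => Snat z k
  | 0 => by simpa [Snat] using continuous_const
  | 1 => by
      have : (fun z : ℝ => Snat z 1) = fun z : ℝ => z := by funext z; rfl
      rw [this]; exact continuous_id
  | (k+2) => by
      have h1 := cont_snat (k+1)
      have h2 := cont_snat k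
      have : (fun z : ℝ => Snat z (k+2)) = fun z : ℝ => z * Snat z (k+1) - Snat z k := by
        funext z; rfl
      rw [this]
      exact (continuous_id.mul h1).sub h2

lemma snat_two : ∀ k : ℕ, Snat 2 k = (k : ℝ) + 1
  | 0 => by simp [Snat]
  | 1 => by norm_num [Snat]
  | (k+2) => by
      have h1 := snat_two (k+1)
      have h2 := snat_two k
      show (2 : ℝ) * Snat 2 (k+1) - Snat 2 k = _
      rw [h1, h2]; push_cast; ring

lemma snat_ge_one (z : ℝ) (hz : 2 ≤ z) (k : ℕ) :
    1 ≤ Snat z k ∧ Snat z k ≤ Snat z (k+1) := by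
  induction k with
  | zero =>
      constructor
      · simp [Snat]
      · show (1 : ℝ) ≤ Snat z 1
        show (1 : ℝ) ≤ z
        linarith
  | succ k ih =>
      obtain ⟨h1, h2⟩ := ih
      have h3 : (1 : ℝ) ≤ Snat z (k+1) := le_trans h1 h2
      refine ⟨h3, ?_⟩
      show Snat z (k+1) ≤ z * Snat z (k+1) - Snat z k
      nlinarith

lemma snat_sin (θ : ℝ) : ∀ k : ℕ,
    Real.sin θ * Snat (2 * Real.cos θ) k = Real.sin (((k : ℝ) + 1) * θ)
  | 0 => by simp [Snat]
  | 1 => by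
      show Real.sin θ * (2 * Real.cos θ) = _
      have : (((1:ℕ) : ℝ) + 1) * θ = 2 * θ := by push_cast; ring
      rw [this, Real.sin_two_mul]; ring
  | (k+2) => by
      have h1 := snat_sin θ (k+1)
      have h2 := snat_sin θ k
      show Real.sin θ * (2 * Real.cos θ * Snat (2 * Real.cos θ) (k+1)
          - Snat (2 * Real.cos θ) k) = _
      push_cast at h1 ⊢
      have key : Real.sin (((k:ℝ) + 2 + 1) * θ)
          = 2 * Real.cos θ * Real.sin (((k:ℝ) + 1 + 1) * θ) - Real.sin (((k:ℝ) + 1) * θ) := by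
        have a1 : ((k:ℝ) + 2 + 1) * θ = ((k:ℝ) + 2) * θ + θ := by ring
        have a2 : ((k:ℝ) + 1) * θ = ((k:ℝ) + 2) * θ - θ := by ring
        have a3 : ((k:ℝ) + 1 + 1) * θ = ((k:ℝ) + 2) * θ := by ring
        rw [a1, a2, a3, Real.sin_add, Real.sin_sub]; ring
      linear_combination 2 * Real.cos θ * h1 - h2 - key

/-- At `τ = 2cos(kπ/n)` with `1 ≤ k ≤ n-1`, `S_{n-1}(τ) = 0` and `S_n(τ) = (-1)^k`. -/
lemma snat_special (n k : ℕ) (hn : 1 ≤ n) (hk1 : 1 ≤ k) (hk2 : k ≤ n - 1) :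
    Snat (2 * Real.cos ((k : ℝ) * π / n)) (n-1) = 0 ∧
    Snat (2 * Real.cos ((k : ℝ) * π / n)) n = (-1)^k := by
  set θ : ℝ := (k : ℝ) * π / n with hθ
  have hnpos : (0 : ℝ) < n := by exact_mod_cast hn
  have hθpos : 0 < θ := by
    apply div_pos (mul_pos _ Real.pi_pos) hnpos
    exact_mod_cast hk1
  have hkn : (k : ℝ) < n := by
    have : k < n := by omega
    exact_mod_cast this
  have hθlt : θ < π := by
    rw [hθ, div_lt_iff₀ hnpos]
    nlinarith [Real.pi_pos]
  have hsin : 0 < Real.sin θ := Real.sin_pos_of_pos_of_lt_pi hθpos hθlt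
  have hne : Real.sin θ ≠ 0 := ne_of_gt hsin
  have hnθ : (n : ℝ) * θ = (k : ℝ) * π := by
    rw [hθ]; field_simp
  constructor
  · have h1 := snat_sin θ (n-1)
    have hcast : ((n-1 : ℕ) : ℝ) + 1 = (n : ℝ) := by
      have : ((n-1 : ℕ) : ℝ) = (n : ℝ) - 1 := by
        push_cast [Nat.cast_sub hn]; ring
      rw [this]; ring
    rw [hcast, hnθ] at h1
    have : Real.sin ((k : ℝ) * π) = 0 := by
      exact_mod_cast Real.sin_nat_mul_pi k
    rw [this] at h1
    exact (mul_eq_zero.mp h1).resolve_left hne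
  · have h2 := snat_sin θ n
    have ha : ((n : ℝ) + 1) * θ = (k : ℝ) * π + θ := by
      rw [← hnθ]; ring
    rw [ha, Real.sin_add] at h2
    have hs0 : Real.sin ((k : ℝ) * π) = 0 := by
      exact_mod_cast Real.sin_nat_mul_pi k
    have hc0 : Real.cos ((k : ℝ) * π) = (-1 : ℝ)^k := by
      have := Real.cos_nat_mul_pi_sub 0 k
      simpa using this
    rw [hs0, hc0] at h2
    have : Real.sin θ * Snat (2 * Real.cos θ) n = Real.sin θ * (-1 : ℝ)^k := by
      rw [h2]; ring
    exact mul_left_cancel₀ hne this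

theorem J2m1_2n_real_roots (m n : ℕ) (hm : 1 ≤ m) (hn : 1 ≤ n) (x₀ : ℝ)
    (hx : 2 * Real.cos (Real.pi / (4 * m + 2)) ≤ |x₀|)
    (t mu f : ℝ → ℝ)
    (ht : ∀ y, t y = x₀ ^ 2 - y - (y - 2) * (y + 2 - x₀ ^ 2) * S m y * S ((m : ℤ) - 1) y)
    (hmu : ∀ y, mu y = 1 - (y + 2 - x₀ ^ 2) * S m y * (S m y - S ((m : ℤ) - 1) y))
    (hf : ∀ y, f y = S n (t y) - mu y * S ((n : ℤ) - 1) (t y)) :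
    ∃ Y : Finset ℝ, n - 1 ≤ Y.card ∧ ∀ y ∈ Y, f y = 0 := by
  -- rewritten forms
  have ht' : ∀ y, t y = x₀ ^ 2 - y - (y - 2) * (y + 2 - x₀ ^ 2) * Snat y m * Snat y (m-1) := by
    intro y; rw [ht, S_natCast, S_sub_one m hm]
  have hmu' : ∀ y, mu y = 1 - (y + 2 - x₀ ^ 2) * Snat y m * (Snat y m - Snat y (m-1)) := by
    intro y; rw [hmu, S_natCast, S_sub_one m hm]
  have hf' : ∀ y, f y = Snat (t y) n - mu y * Snat (t y) (n-1) := by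
    intro y; rw [hf, S_natCast, S_sub_one n hn]
  -- continuity
  have cont_t : Continuous t := by
    rw [show t = fun y => x₀ ^ 2 - y - (y - 2) * (y + 2 - x₀ ^ 2) * Snat y m * Snat y (m-1)
      from funext ht']
    exact ((continuous_const.sub continuous_id).sub
      ((((continuous_id.sub continuous_const).mul
        ((continuous_id.add continuous_const).sub continuous_const)).mul
        (cont_snat m)).mul (cont_snat (m-1))))
  have cont_mu : Continuous mu := by
    rw [show mu = fun y => 1 - (y + 2 - x₀ ^ 2) * Snat y m * (Snat y m - Snat y (m-1))
      from funext hmu']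
    exact continuous_const.sub
      ((((continuous_id.add continuous_const).sub continuous_const).mul
        (cont_snat m)).mul ((cont_snat m).sub (cont_snat (m-1))))
  have cont_f : Continuous f := by
    rw [show f = fun y => Snat (t y) n - mu y * Snat (t y) (n-1) from funext hf']
    exact ((cont_snat n).comp cont_t).sub (cont_mu.mul ((cont_snat (n-1)).comp cont_t))
  -- anchor and far point
  set a : ℝ := x₀ ^ 2 - 2 with ha
  set B : ℝ := x₀ ^ 2 + 2 with hB
  have haB : a ≤ B := by rw [ha, hB]; linarith
  have hta : t a = 2 := by rw [ht']; ring
  have hmua : mu a = 1 := by rw [hmu']; ring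
  have hfa : f a = 1 := by
    rw [hf', hta, hmua, snat_two, snat_two]
    have : ((n-1 : ℕ) : ℝ) = (n : ℝ) - 1 := by push_cast [Nat.cast_sub hn]; ring
    rw [this]; ring
  have hx0 : (0 : ℝ) ≤ x₀ ^ 2 := sq_nonneg x₀
  have hB2 : (2 : ℝ) ≤ B := by rw [hB]; linarith
  have htB : t B ≤ -2 := by
    have h1 := (snat_ge_one B hB2 m).1
    have h2 := (snat_ge_one B hB2 (m-1)).1
    rw [ht']
    have e : x₀ ^ 2 - B - (B - 2) * (B + 2 - x₀ ^ 2) * Snat B m * Snat B (m-1)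
        = -2 - 4 * x₀ ^ 2 * (Snat B m * Snat B (m-1)) := by rw [hB]; ring
    rw [e]
    have hPQ : 0 ≤ Snat B m * Snat B (m-1) := by nlinarith
    have := mul_nonneg hx0 hPQ
    linarith
  -- main chain
  have key : ∀ k : ℕ, k ≤ n - 1 → ∃ (R : Finset ℝ) (b : ℝ),
      R.card = k ∧ (∀ r ∈ R, f r = 0) ∧ (∀ r ∈ R, r < b) ∧ a ≤ b ∧ b ≤ B ∧
      t b = 2 * Real.cos ((k : ℝ) * π / n) ∧ f b = (-1 : ℝ)^k := by
    intro k
    induction k with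
    | zero =>
        intro _
        refine ⟨∅, a, by simp, by simp, by simp, le_refl a, haB, ?_, by simpa using hfa⟩
        rw [hta]; norm_num
    | succ k ih =>
        intro hk1
        obtain ⟨R, b, hcard, hroots, hlt, hab, hbB, htb, hfb⟩ := ih (by omega)
        have hnpos : (0 : ℝ) < n := by exact_mod_cast hn
        have hpin : 0 < π / n := div_pos Real.pi_pos hnpos
        have hang0 : (0 : ℝ) ≤ (k : ℝ) * π / n := by positivity
        have hang1 : ((k : ℝ) + 1) * π / n ≤ π := by
        -- k+1 ≤ n
          have hkn : (k : ℝ) + 1 ≤ (n : ℝ) := by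
            have : k + 1 ≤ n := by omega
            exact_mod_cast this
          rw [div_le_iff₀ hnpos]
          nlinarith [Real.pi_pos]
        have hanglt : (k : ℝ) * π / n < ((k : ℝ) + 1) * π / n := by
          rw [div_lt_div_iff₀ hnpos hnpos]
          nlinarith [Real.pi_pos]
        have hcos_lt : Real.cos (((k : ℝ) + 1) * π / n) < Real.cos ((k : ℝ) * π / n) :=
          Real.cos_lt_cos_of_nonneg_of_le_pi hang0 hang1 hanglt
        set c : ℝ := 2 * Real.cos (((k : ℝ) + 1) * π / n) with hc
        have hcge : -2 ≤ c := by
          have := Real.neg_one_le_cos (((k : ℝ) + 1) * π / n)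
          rw [hc]; linarith
        have hclt : c < t b := by rw [htb, hc]; linarith
        -- IVT for t on [b, B]
        have hmem : c ∈ Set.Icc (t B) (t b) := ⟨by linarith, le_of_lt hclt⟩
        obtain ⟨b', hb'mem, htb'⟩ :=
          intermediate_value_Icc' hbB cont_t.continuousOn hmem
        obtain ⟨hbb'le, hb'B⟩ := hb'mem
        have hbb' : b < b' := by
          rcases lt_or_eq_of_le hbb'le with h | h
          · exact h
          · exfalso; rw [← h] at htb'; rw [htb'] at hclt; exact lt_irrefl _ hclt
        -- value of f at b'
        have hfb' : f b' = (-1 : ℝ)^(k+1) := by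
          obtain ⟨hz, ho⟩ := snat_special n (k+1) hn (by omega) hk1
          have hcast : ((k+1 : ℕ) : ℝ) = (k : ℝ) + 1 := by push_cast; ring
          rw [hcast] at hz ho
          rw [hf', htb', hc, hz, ho]; ring
        -- IVT for f on [b, b'] : signs alternate
        have hne1 : f b ≠ 0 := by
          rw [hfb]
          rcases Nat.even_or_odd k with he | ho
          · rw [he.neg_one_pow]; norm_num
          · rw [ho.neg_one_pow]; norm_num
        have hne2 : f b' ≠ 0 := by
          rw [hfb']
          rcases Nat.even_or_odd (k+1) with he | ho
          · rw [he.neg_one_pow]; norm_num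
          · rw [ho.neg_one_pow]; norm_num
        obtain ⟨r, hrmem, hfr⟩ : ∃ r ∈ Set.Icc b b', f r = 0 := by
          rcases Nat.even_or_odd k with he | ho
          · have e1 : f b = 1 := by rw [hfb, he.neg_one_pow]
            have e2 : f b' = -1 := by
              rw [hfb']
              have : Odd (k+1) := Even.add_one he
              rw [this.neg_one_pow]
            have h0 : (0 : ℝ) ∈ Set.Icc (f b') (f b) := by rw [e1, e2]; norm_num
            obtain ⟨r, hr, hr0⟩ := intermediate_value_Icc' (le_of_lt hbb')
              cont_f.continuousOn h0
            exact ⟨r, hr, hr0⟩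
          · have e1 : f b = -1 := by rw [hfb, ho.neg_one_pow]
            have e2 : f b' = 1 := by
              rw [hfb']
              have : Even (k+1) := Odd.add_one ho
              rw [this.neg_one_pow]
            have h0 : (0 : ℝ) ∈ Set.Icc (f b) (f b') := by rw [e1, e2]; norm_num
            obtain ⟨r, hr, hr0⟩ := intermediate_value_Icc (le_of_lt hbb')
              cont_f.continuousOn h0
            exact ⟨r, hr, hr0⟩
        have hbr : b < r := by
          rcases lt_or_eq_of_le hrmem.1 with h | h
          · exact h
          · exfalso; rw [← h] at hfr; exact hne1 hfr
        have hrb' : r < b' := by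
          rcases lt_or_eq_of_le hrmem.2 with h | h
          · exact h
          · exfalso; rw [h] at hfr; exact hne2 hfr
        have hrR : r ∉ R := by
          intro hmemR
          exact absurd (hlt r hmemR) (not_lt.mpr (le_of_lt hbr))
        refine ⟨insert r R, b', ?_, ?_, ?_, le_trans hab (le_of_lt hbb'), hb'B, ?_, hfb'⟩
        · rw [Finset.card_insert_of_notMem hrR, hcard]
        · intro s hs
          rcases Finset.mem_insert.mp hs with h | h
          · rw [h]; exact hfr
          · exact hroots s h
        · intro s hs
          rcases Finset.mem_insert.mp hs with h | h
          · rw [h]; exact hrb'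
          · exact lt_trans (hlt s h) hbb'
        · rw [htb', hc]
          have : ((k+1 : ℕ) : ℝ) = (k : ℝ) + 1 := by push_cast; ring
          rw [this]
  obtain ⟨R, b, hcard, hroots, -, -, -, -, -⟩ := key (n-1) (le_refl _)
  exact ⟨R, by rw [hcard], hroots⟩
end

section
/- Let m, n be positive integers and x₀ a real number with |x₀| ≥ 2cos(π/(4m+2)). Define, for real y, t(y) = x₀² - y - (y-2)(y+2-x₀²)·S_m(y)·S_{m-1}(y) and μ(y) = 1 + (y+2-x₀²)·S_{m-1}(y)·(S_m(y) - S_{m-1}(y)), and f(y) = S_n(t(y)) - μ(y)·S_{n-1}(t(y)). Then f has at least n distinct real roots. -/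
/-! As `y` runs from `x₀² - 2` to `x₀² + 2`, the trace `t y` goes from `2` to a value `≤ -2`,
so by the intermediate value theorem it takes the values `2 cos (kπ/n)`, `k = 0, …, n`, at
increasing points `b₀ < ⋯ < bₙ`. For `0 < k < n` this value is a zero of `S_{n-1}` at which
`S_n = (-1)^k`, so `f (b_k) = (-1)^k` whatever `μ` is; also `f (b₀) = 1`. At the last point
`t = -2` and `(-1)^n f = n + 1 + μ n`, which is positive once `μ ≥ 0`; this is guaranteed by
taking `bₙ ≥ 2` and `bₙ ≥ x₀² - 2`, where `0 ≤ S_{m-1} ≤ S_m`. The `n + 1` alternating signs give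
`n` zeros of `f`. -/

open Real

open Set Polynomial

theorem Snat_eq_eval (z : ℝ) (n : ℕ) : Snat z n = (Chebyshev.S ℝ n).eval z := by
  induction n using Nat.twoStepInduction with
  | zero => simp [Snat]
  | one => simp [Snat]
  | more n ih₀ ih₁ =>
    rw [Snat, ih₀, ih₁]
    push_cast
    simp [Chebyshev.S_add_two]

theorem S_eq_eval (k : ℤ) (z : ℝ) : S k z = (Chebyshev.S ℝ k).eval z := by
  unfold S
  split_ifs with h₀ h₁
  · rw [Snat_eq_eval, Int.toNat_of_nonneg h₀]
  · simp [h₁]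
  · rw [Snat_eq_eval, Int.toNat_of_nonneg (by omega), ← eval_neg, ← Chebyshev.S_neg_sub_two]
    congr; ring

namespace Polynomial.Chebyshev

theorem S_real_eval_nonneg_and_le_succ {y : ℝ} (hy : 2 ≤ y) {k : ℤ} (hk : -1 ≤ k) :
    0 ≤ (S ℝ k).eval y ∧ (S ℝ k).eval y ≤ (S ℝ (k + 1)).eval y := by
  induction k, hk using Int.leInduction with
  | base => norm_num
  | succ k _ ih =>
    have hrec : (S ℝ (k + 1 + 1)).eval y - (S ℝ (k + 1)).eval y
        = (y - 2) * (S ℝ (k + 1)).eval y + ((S ℝ (k + 1)).eval y - (S ℝ k).eval y) := by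
      rw [add_assoc, one_add_one_eq_two, S_add_two]; simp only [eval_sub, eval_mul, eval_X]; ring
    exact ⟨ih.1.trans ih.2, by nlinarith [hrec, mul_nonneg (sub_nonneg.2 hy) (ih.1.trans ih.2)]⟩

theorem S_real_eval_two_mul_cos_mul_pi_div {n k : ℕ} (hk₀ : 0 < k) (hkn : k < n + 1) :
    (S ℝ n).eval (2 * cos (k * π / (n + 1))) = 0 ∧
      (S ℝ (n + 1)).eval (2 * cos (k * π / (n + 1))) = (-1) ^ k := by
  set θ := k * π / (n + 1) with hθ
  have hsin : sin θ ≠ 0 := by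
    refine (sin_pos_of_pos_of_lt_pi (by positivity) ?_).ne'
    rw [hθ, div_lt_iff₀ (by positivity)]
    have : (k : ℝ) < n + 1 := by exact_mod_cast hkn
    nlinarith [pi_pos]
  have hnθ : ((n : ℝ) + 1) * θ = k * π := by rw [hθ]; field_simp
  have h₀ := S_two_mul_real_cos θ n
  have h₁ := S_two_mul_real_cos θ ((n : ℤ) + 1)
  push_cast at h₀ h₁
  rw [hnθ, sin_nat_mul_pi] at h₀
  rw [add_mul, one_mul, hnθ, add_comm _ θ, sin_add_nat_mul_pi] at h₁
  exact ⟨(mul_eq_zero.1 h₀).resolve_right hsin, mul_right_cancel₀ hsin h₁⟩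

theorem neg_one_pow_mul_S_real_eval_neg_two_sub_pos (n : ℕ) {μ : ℝ} (hμ : 0 ≤ μ) :
    0 < (-1) ^ (n + 1) * ((S ℝ (n + 1)).eval (-2) - μ * (S ℝ n).eval (-2)) := by
  have hsq : (-1 : ℝ) ^ n * (-1) ^ n = 1 := by rw [← mul_pow]; norm_num
  have h₁ := S_eval_neg_two ℝ ((n : ℤ) + 1)
  have h₀ := S_eval_neg_two ℝ (n : ℤ)
  push_cast [Int.negOnePow_add, Int.negOnePow_one, Int.cast_negOnePow_natCast] at h₀ h₁
  rw [h₀, h₁, pow_succ]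
  calc (0 : ℝ) < (n + 1 + 1) + μ * (n + 1) := by positivity
    _ = _ := by linear_combination (-(n + 1 + 1) - μ * (n + 1)) * hsq

end Polynomial.Chebyshev

theorem strictAntiOn_two_mul_cos_mul_pi_div {n : ℕ} (hn : 0 < n) :
    StrictAntiOn (fun k : ℕ => 2 * cos (k * π / n)) (Iic n) := by
  intro i hi j hj hij
  have hn' : (0 : ℝ) < n := by exact_mod_cast hn
  have hmem : ∀ k ∈ Iic n, (k : ℝ) * π / n ∈ Icc 0 π := fun k hk => by
    refine ⟨by positivity, (div_le_iff₀ hn').2 ?_⟩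
    have : (k : ℝ) ≤ n := by exact_mod_cast hk
    nlinarith [pi_pos]
  have : (i : ℝ) * π / n < j * π / n := by gcongr
  simpa using strictAntiOn_cos (hmem i hi) (hmem j hj) this

theorem exists_mem_Ioo_eq_zero_of_mul_neg {g : ℝ → ℝ} {a b : ℝ} (hab : a ≤ b)
    (hg : ContinuousOn g (Icc a b)) (h : g a * g b < 0) : ∃ c ∈ Ioo a b, g c = 0 := by
  rcases mul_neg_iff.1 h with ⟨ha, hb⟩ | ⟨ha, hb⟩
  · exact intermediate_value_Ioo' hab hg ⟨hb, ha⟩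
  · exact intermediate_value_Ioo hab hg ⟨ha, hb⟩

theorem exists_finset_zeros_of_alternating {g : ℝ → ℝ} (hg : Continuous g) {N : ℕ}
    {b : ℕ → ℝ} (hb : StrictMonoOn b (Iic N)) (hsign : ∀ k ≤ N, 0 < (-1) ^ k * g (b k)) :
    ∃ Y : Finset ℝ, N ≤ Y.card ∧ ∀ y ∈ Y, g y = 0 := by
  have hzero : ∀ k < N, ∃ c ∈ Ioo (b k) (b (k + 1)), g c = 0 := fun k hk => by
    refine exists_mem_Ioo_eq_zero_of_mul_neg (hb.monotoneOn (mem_Iic.2 (by omega)) hk (by simp))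
      hg.continuousOn ?_
    have hprod := mul_pos (hsign k (by omega)) (hsign (k + 1) hk)
    have hsq : (-1 : ℝ) ^ k * (-1) ^ k = 1 := by rw [← mul_pow]; norm_num
    rw [pow_succ] at hprod
    nlinarith
  choose c hc hgc using fun k : Fin N => hzero k k.2
  have hc_mono : StrictMono c := fun i j hij => calc
    c i < b (i + 1) := (hc i).2
    _ ≤ b j := hb.monotoneOn (mem_Iic.2 i.2) (mem_Iic.2 j.2.le) hij
    _ < c j := (hc j).1
  exact ⟨Finset.univ.image c, by simp [Finset.card_image_of_injective _ hc_mono.injective],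
    by simpa using hgc⟩

theorem StrictMonoOn.update_Iic_succ {α : Type*} [Preorder α] {b : ℕ → α} {N : ℕ}
    (hb : StrictMonoOn b (Iic N)) {c : α} (hc : b N < c) :
    StrictMonoOn (Function.update b (N + 1) c) (Iic (N + 1)) := by
  intro i hi j hj hij
  simp only [mem_Iic] at hi hj
  have hiN : i ≠ N + 1 := by omega
  rcases eq_or_ne j (N + 1) with rfl | hjN
  · simp only [Function.update_of_ne hiN, Function.update_self]
    exact (hb.monotoneOn (by simp; omega) (by simp) (by omega)).trans_lt hc
  · simp only [Function.update_of_ne hiN, Function.update_of_ne hjN]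
    exact hb (by simp; omega) (by simp; omega) hij

theorem exists_strictMonoOn_comp_eq_of_strictAntiOn {g : ℝ → ℝ} (hg : Continuous g)
    {w : ℕ → ℝ} {N : ℕ} (hw : StrictAntiOn w (Iic N)) {a B : ℝ} (haB : a ≤ B) (ha : g a = w 0)
    (hB : g B ≤ w N) :
    ∃ b : ℕ → ℝ, b 0 = a ∧ StrictMonoOn b (Iic N) ∧
      ∀ k ≤ N, a ≤ b k ∧ b k ≤ B ∧ g (b k) = w k := by
  induction N with
  | zero =>
    refine ⟨fun _ => a, rfl, fun i hi j hj hij => by simp_all, fun k hk => ?_⟩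
    obtain rfl := Nat.le_zero.1 hk
    exact ⟨le_rfl, haB, ha⟩
  | succ N ih =>
    have hw_succ : w (N + 1) < w N := hw (by simp) (by simp) (by omega)
    obtain ⟨b, hb0, hb, hbk⟩ := ih (hw.mono (Iic_subset_Iic.2 N.le_succ)) (hB.trans hw_succ.le)
    obtain ⟨haN, hNB, hgN⟩ := hbk N le_rfl
    obtain ⟨c, ⟨hNc, hcB⟩, hgc⟩ :=
      intermediate_value_Icc' hNB hg.continuousOn ⟨hB, hgN ▸ hw_succ.le⟩
    have hNc' : b N < c := hNc.lt_of_ne (by rintro rfl; exact hw_succ.ne (hgc.symm.trans hgN))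
    refine ⟨Function.update b (N + 1) c, by simp [hb0], hb.update_Iic_succ hNc', fun k hk => ?_⟩
    rcases eq_or_ne k (N + 1) with rfl | hkN
    · simpa using ⟨haN.trans hNc, hcB, hgc⟩
    · simpa [Function.update_of_ne hkN] using hbk k (by omega)

theorem exists_strictMonoOn_hitting_cos_nodes {t : ℝ → ℝ} (ht : Continuous t) (n : ℕ)
    {a L B : ℝ} (haB : a ≤ B) (hLB : L ≤ B) (hta : t a = 2) (htL : -2 ≤ t L) (htB : t B ≤ -2) :
    ∃ b : ℕ → ℝ, b 0 = a ∧ StrictMonoOn b (Iic (n + 1)) ∧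
      (∀ k ≤ n, t (b k) = 2 * cos (k * π / (n + 1))) ∧
      t (b (n + 1)) = -2 ∧ a ≤ b (n + 1) ∧ L ≤ b (n + 1) := by
  set v : ℕ → ℝ := fun k => 2 * cos (k * π / (n + 1 : ℕ))
  have hv := strictAntiOn_two_mul_cos_mul_pi_div (Nat.succ_pos n)
  have hv0 : v 0 = 2 := by simp [v]
  have hvlast : v (n + 1) = -2 := by
    simp only [v, mul_div_cancel_left₀ π (Nat.cast_ne_zero.2 n.succ_ne_zero), cos_pi]
    norm_num
  have hvn : -2 < v n := hvlast ▸ hv (by simp) (by simp) (Nat.lt_succ_self n)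
  obtain ⟨b, hb0, hb, hbk⟩ :=
    exists_strictMonoOn_comp_eq_of_strictAntiOn ht (hv.mono (Iic_subset_Iic.2 n.le_succ)) haB
      (hta.trans hv0.symm) (htB.trans hvn.le)
  obtain ⟨han, hnB, htn⟩ := hbk n le_rfl
  have ht_max : -2 ≤ t (max L (b n)) := by
    rcases max_cases L (b n) with ⟨h, _⟩ | ⟨h, _⟩ <;> rw [h]
    exacts [htL, htn ▸ hvn.le]
  obtain ⟨c, ⟨hc_max, -⟩, htc⟩ :=
    intermediate_value_Icc' (max_le hLB hnB) ht.continuousOn ⟨htB, ht_max⟩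
  have hnc : b n < c := (le_of_max_le_right hc_max).lt_of_ne
    (by rintro rfl; exact hvn.ne (htc.symm.trans htn))
  refine ⟨Function.update b (n + 1) c, by simp [hb0], hb.update_Iic_succ hnc, fun k hk => ?_,
    by simpa using htc, by simpa using han.trans hnc.le, by simpa using le_of_max_le_left hc_max⟩
  rw [Function.update_of_ne (by omega)]
  simpa [v] using (hbk k hk).2.2

theorem exists_finset_zeros_S_comp_sub_mul_S_comp {t μ : ℝ → ℝ} (ht : Continuous t)
    (hμ : Continuous μ) (n : ℕ) {a L B : ℝ} (haB : a ≤ B) (hLB : L ≤ B) (hta : t a = 2)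
    (hμa : μ a = 1) (htL : -2 ≤ t L) (htB : t B ≤ -2)
    (hμ_nonneg : ∀ y, a ≤ y → L ≤ y → 0 ≤ μ y) :
    ∃ Y : Finset ℝ, n + 1 ≤ Y.card ∧ ∀ y ∈ Y,
      (Chebyshev.S ℝ (n + 1)).eval (t y) - μ y * (Chebyshev.S ℝ n).eval (t y) = 0 := by
  obtain ⟨b, hb0, hb, hbk, hbt, hab, hLb⟩ :=
    exists_strictMonoOn_hitting_cos_nodes ht n haB hLB hta htL htB
  refine exists_finset_zeros_of_alternating (by fun_prop) hb fun k hk => ?_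
  rcases eq_or_lt_of_le hk with rfl | hkn
  · rw [hbt]
    exact Chebyshev.neg_one_pow_mul_S_real_eval_neg_two_sub_pos n (hμ_nonneg _ hab hLb)
  rcases Nat.eq_zero_or_pos k with rfl | hk₀
  · simp [hb0, hta, hμa]
  · obtain ⟨h₀, h₁⟩ := Chebyshev.S_real_eval_two_mul_cos_mul_pi_div hk₀ hkn
    rw [hbk k (by omega), h₀, h₁, mul_zero, sub_zero, ← mul_pow]
    norm_num

theorem J2m1_neg2n_real_roots_general (m n : ℕ) (hn : 1 ≤ n) (x₀ : ℝ)
    (t mu f : ℝ → ℝ)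
    (ht : ∀ y, t y = x₀ ^ 2 - y - (y - 2) * (y + 2 - x₀ ^ 2) * S m y * S ((m : ℤ) - 1) y)
    (hmu : ∀ y, mu y = 1 + (y + 2 - x₀ ^ 2) * S ((m : ℤ) - 1) y * (S m y - S ((m : ℤ) - 1) y))
    (hf : ∀ y, f y = S n (t y) - mu y * S ((n : ℤ) - 1) (t y)) :
    ∃ Y : Finset ℝ, n ≤ Y.card ∧ ∀ y ∈ Y, f y = 0 := by
  obtain ⟨n, rfl⟩ := Nat.exists_eq_add_of_le' hn
  simp only [S_eq_eval] at ht hmu hf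
  push_cast [add_sub_cancel_right] at hf
  have hS : ∀ y, 2 ≤ y → 0 ≤ (Chebyshev.S ℝ ((m : ℤ) - 1)).eval y ∧
      (Chebyshev.S ℝ ((m : ℤ) - 1)).eval y ≤ (Chebyshev.S ℝ m).eval y := fun y hy => by
    simpa using Chebyshev.S_real_eval_nonneg_and_le_succ hy (k := (m : ℤ) - 1) (by omega)
  have h2B : 2 ≤ x₀ ^ 2 + 2 := le_add_of_nonneg_left (sq_nonneg x₀)
  have htB : t (x₀ ^ 2 + 2) ≤ -2 := by
    obtain ⟨h₀, h₁⟩ := hS (x₀ ^ 2 + 2) h2B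
    rw [ht]
    nlinarith [mul_nonneg (mul_nonneg (sq_nonneg x₀) h₀) (h₀.trans h₁)]
  have hmu_nonneg : ∀ y, x₀ ^ 2 - 2 ≤ y → 2 ≤ y → 0 ≤ mu y := fun y hay h2y => by
    obtain ⟨h₀, h₁⟩ := hS y h2y
    rw [hmu]
    nlinarith [mul_nonneg (mul_nonneg (by linarith : 0 ≤ y + 2 - x₀ ^ 2) h₀) (sub_nonneg.2 h₁)]
  obtain ⟨Y, hYcard, hY⟩ := exists_finset_zeros_S_comp_sub_mul_S_comp
    (by rw [funext ht]; fun_prop) (by rw [funext hmu]; fun_prop) n (by linarith) h2B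
    (by rw [ht]; ring) (by rw [hmu]; ring) (by rw [ht]; nlinarith [sq_nonneg x₀]) htB hmu_nonneg
  exact ⟨Y, hYcard, fun y hy => (hf y).trans (hY y hy)⟩

theorem J2m1_neg2n_real_roots (m n : ℕ) (hm : 1 ≤ m) (hn : 1 ≤ n) (x₀ : ℝ)
    (hx : 2 * Real.cos (Real.pi / (4 * m + 2)) ≤ |x₀|)
    (t mu f : ℝ → ℝ)
    (ht : ∀ y, t y = x₀ ^ 2 - y - (y - 2) * (y + 2 - x₀ ^ 2) * S m y * S ((m : ℤ) - 1) y)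
    (hmu : ∀ y, mu y = 1 + (y + 2 - x₀ ^ 2) * S ((m : ℤ) - 1) y * (S m y - S ((m : ℤ) - 1) y))
    (hf : ∀ y, f y = S n (t y) - mu y * S ((n : ℤ) - 1) (t y)) :
    ∃ Y : Finset ℝ, n ≤ Y.card ∧ ∀ y ∈ Y, f y = 0 :=
  J2m1_neg2n_real_roots_general m n hn x₀ t mu f ht hmu hf
end

section
/- Let m ≥ 1 be an integer and x, y real (or complex) numbers. Define t = x² - y - (y-2)(y+2-x²)·S_m(y)·S_{m-1}(y). Then 2 - t = (y - x² + 2)·(S_m(y) - S_{m-1}(y))². -/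
open Real

theorem two_sub_t_identity (m : ℕ) (hm : 1 ≤ m) (x y : ℝ) (t : ℝ)
    (ht : t = x ^ 2 - y - (y - 2) * (y + 2 - x ^ 2) * S m y * S ((m : ℤ) - 1) y) :
    2 - t = (y - x ^ 2 + 2) * (S m y - S ((m : ℤ) - 1) y) ^ 2 := by
  have pell : ∀ n : ℕ, Snat y (n + 1) ^ 2 + Snat y n ^ 2
      - y * Snat y (n + 1) * Snat y n = 1 := by
    intro n
    induction n with
    | zero => simp [Snat]; ring
    | succ k ih =>
      have h : Snat y (k + 2) = y * Snat y (k + 1) - Snat y k := rfl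
      rw [h]; nlinarith [ih]
  obtain ⟨n, rfl⟩ : ∃ n, m = n + 1 := ⟨m - 1, (Nat.succ_pred_eq_of_pos hm).symm⟩
  have h1 : S (↑(n + 1)) y = Snat y (n + 1) := by
    rw [S, if_pos (by positivity)]; norm_num
  have h2 : S ((↑(n + 1) : ℤ) - 1) y = Snat y n := by
    have e : ((↑(n + 1) : ℤ) - 1) = (n : ℤ) := by push_cast; ring
    rw [e, S, if_pos (by positivity)]; norm_num
  rw [h1, h2] at ht
  rw [h1, h2]
  subst ht
  linear_combination (x ^ 2 - y - 2) * pell n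
end
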